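/- arXiv:2602.02209 — 7 statements merged into one kernel-verified Lean document; each statement's English description precedes it below -/
import Mathlib

section
/- Let n ≥ 1. For ν ∈ ℤ^n let ν₋ denote the unique non-decreasing rearrangement of ν, let ρ = (n−1, n−2, …, 1, 0) ∈ ℤ^n, set d(ν) = (ν − ν₋)·ρ (dot product) and ℓ(ν) = Σ_{1≤i<j≤n} |ν_i − ν_j|. Then for all ν, ν′ ∈ ℤ^n one has 2·( d(ν) + d(ν′) − d(ν + ν′) ) = ℓ(ν) + ℓ(ν′) − ℓ(ν + ν′). -/
open Finset

/-- `ρ = (n-1, n-2, ..., 1, 0) ∈ ℤ^n`. -/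
def rhoVec (n : ℕ) : Fin n → ℤ := fun i => (n : ℤ) - 1 - (i : ℕ)

/-- The unique non-decreasing rearrangement `ν₋` of `ν`. -/
def antidom {n : ℕ} (ν : Fin n → ℤ) : Fin n → ℤ := ν ∘ (Tuple.sort ν)

/-- `d(ν) = (ν - ν₋) · ρ`. -/
def dcoef {n : ℕ} (ν : Fin n → ℤ) : ℤ :=
  ∑ i, (ν i - antidom ν i) * rhoVec n i

/-- `ℓ(ν) = Σ_{i<j} |ν_i - ν_j|`. -/
def lenT {n : ℕ} (ν : Fin n → ℤ) : ℤ :=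
  ∑ p ∈ Finset.univ.filter (fun p : Fin n × Fin n => p.1 < p.2), |ν p.1 - ν p.2|

lemma lenT_eq {n : ℕ} (ν : Fin n → ℤ) :
    lenT ν = ∑ i, ∑ j, if i < j then |ν i - ν j| else 0 := by
  rw [lenT, Finset.sum_filter, Fintype.sum_prod_type]

lemma double_sum_eq {n : ℕ} (f : Fin n → Fin n → ℤ)
    (hsymm : ∀ i j, f i j = f j i) (hdiag : ∀ i, f i i = 0) :
    ∑ i, ∑ j, f i j = 2 * ∑ i, ∑ j, (if i < j then f i j else 0) := by
  have key : ∀ i j : Fin n, f i j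
      = (if i < j then f i j else 0) + (if j < i then f i j else 0) := by
    intro i j
    rcases lt_trichotomy i j with h | h | h
    · simp [h, not_lt_of_gt h]
    · simp [h, hdiag]
    · simp [h, not_lt_of_gt h]
  calc ∑ i, ∑ j, f i j
      = ∑ i, ∑ j, ((if i < j then f i j else 0) + (if j < i then f i j else 0)) := by
        simp_rw [← key]
    _ = (∑ i, ∑ j, (if i < j then f i j else 0))
        + ∑ i, ∑ j, (if j < i then f i j else 0) := by
        simp [Finset.sum_add_distrib]
    _ = 2 * ∑ i, ∑ j, (if i < j then f i j else 0) := by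
        rw [Finset.sum_comm (f := fun i j => if j < i then f i j else 0)]
        conv_lhs => rw [show (∑ j, ∑ i, if j < i then f i j else 0)
          = ∑ j, ∑ i, if j < i then f j i else 0 from by
            refine Finset.sum_congr rfl fun j _ => Finset.sum_congr rfl fun i _ => ?_
            rw [hsymm]]
        ring

lemma lenT_comp_perm {n : ℕ} (ν : Fin n → ℤ) (σ : Equiv.Perm (Fin n)) :
    lenT (ν ∘ σ) = lenT ν := by
  have h2 : ∀ μ : Fin n → ℤ,
      ∑ i, ∑ j, |μ i - μ j| = 2 * lenT μ := by
    intro μ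
    rw [lenT_eq]
    exact double_sum_eq _ (fun i j => abs_sub_comm _ _) (fun i => by simp)
  have hfull : ∑ i, ∑ j, |(ν ∘ σ) i - (ν ∘ σ) j| = ∑ i, ∑ j, |ν i - ν j| := by
    calc ∑ i, ∑ j, |ν (σ i) - ν (σ j)|
        = ∑ i, ∑ j, |ν (σ i) - ν j| := by
          refine Finset.sum_congr rfl fun i _ => ?_
          exact Equiv.sum_comp σ (fun j => |ν (σ i) - ν j|)
      _ = ∑ i, ∑ j, |ν i - ν j| := by
          exact Equiv.sum_comp σ (fun i => ∑ j, |ν i - ν j|)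
  have := (h2 (ν ∘ σ)).symm.trans (hfull.trans (h2 ν))
  omega

lemma card_lt_fin {n : ℕ} (j : Fin n) :
    (Finset.univ.filter (fun i : Fin n => i < j)).card = (j : ℕ) := by
  have : Finset.univ.filter (fun i : Fin n => i < j) = Finset.Iio j := by
    ext i; simp
  rw [this, Fin.card_Iio]

lemma card_gt_fin {n : ℕ} (i : Fin n) :
    (Finset.univ.filter (fun j : Fin n => i < j)).card = n - 1 - (i : ℕ) := by
  have : Finset.univ.filter (fun j : Fin n => i < j) = Finset.Ioi i := by
    ext j; simp
  rw [this, Fin.card_Ioi]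

lemma lenT_monotone {n : ℕ} (μ : Fin n → ℤ) (hμ : Monotone μ) :
    lenT μ = ∑ k, μ k * (2 * (k : ℕ) - ((n : ℤ) - 1)) := by
  rw [lenT_eq]
  have habs : ∀ i j : Fin n, (if i < j then |μ i - μ j| else 0)
      = (if i < j then μ j else 0) - (if i < j then μ i else 0) := by
    intro i j
    split
    · next h => rw [abs_sub_comm, abs_of_nonneg (by linarith [hμ h.le])]
    · ring
  simp_rw [habs]
  have hsplit : (∑ i, ∑ j, ((if i < j then μ j else 0) - (if i < j then μ i else 0)))
      = (∑ i, ∑ j, (if i < j then μ j else 0)) - ∑ i, ∑ j, (if i < j then μ i else 0) := by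
    simp [Finset.sum_sub_distrib]
  rw [hsplit]
  have hA : (∑ i, ∑ j, (if i < j then μ j else 0)) = ∑ k, μ k * (k : ℕ) := by
    rw [Finset.sum_comm]
    refine Finset.sum_congr rfl fun j _ => ?_
    rw [← Finset.sum_filter, Finset.sum_const, card_lt_fin, nsmul_eq_mul, mul_comm]
  have hB : (∑ i, ∑ j, (if i < j then μ i else 0)) = ∑ k, μ k * ((n : ℤ) - 1 - (k : ℕ)) := by
    refine Finset.sum_congr rfl fun i _ => ?_
    rw [← Finset.sum_filter, Finset.sum_const, card_gt_fin, nsmul_eq_mul, mul_comm]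
    congr 1
    have := i.isLt
    push_cast [Nat.sub_sub]
    omega
  rw [hA, hB, ← Finset.sum_sub_distrib]
  exact Finset.sum_congr rfl fun k _ => by ring

lemma key_id {n : ℕ} (ν : Fin n → ℤ) :
    2 * dcoef ν
      = 2 * (∑ i, ν i * rhoVec n i) - ((n : ℤ) - 1) * (∑ i, ν i) + lenT ν := by
  have hmono : Monotone (antidom ν) := Tuple.monotone_sort ν
  have hsum : ∑ i, antidom ν i = ∑ i, ν i :=
    Equiv.sum_comp (Tuple.sort ν) ν
  have hlen : lenT (antidom ν) = lenT ν := lenT_comp_perm ν (Tuple.sort ν)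
  have hmain : 2 * (∑ i, antidom ν i * rhoVec n i)
      = ((n : ℤ) - 1) * (∑ i, ν i) - lenT ν := by
    rw [← hlen, ← hsum, lenT_monotone _ hmono, Finset.mul_sum, Finset.mul_sum,
      ← Finset.sum_sub_distrib]
    refine Finset.sum_congr rfl fun k _ => ?_
    simp only [rhoVec]
    ring
  have : dcoef ν = (∑ i, ν i * rhoVec n i) - ∑ i, antidom ν i * rhoVec n i := by
    rw [dcoef, ← Finset.sum_sub_distrib]
    exact Finset.sum_congr rfl fun k _ => by ring
  rw [this]
  linarith

theorem stmt0 (n : ℕ) (hn : 1 ≤ n) (ν ν' : Fin n → ℤ) :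
    2 * (dcoef ν + dcoef ν' - dcoef (ν + ν')) = lenT ν + lenT ν' - lenT (ν + ν') := by
  have h1 := key_id ν
  have h2 := key_id ν'
  have h3 := key_id (ν + ν')
  have e1 : ∑ i, (ν + ν') i * rhoVec n i
      = (∑ i, ν i * rhoVec n i) + ∑ i, ν' i * rhoVec n i := by
    rw [← Finset.sum_add_distrib]
    exact Finset.sum_congr rfl fun k _ => by simp [Pi.add_apply]; ring
  have e2 : ∑ i, (ν + ν') i = (∑ i, ν i) + ∑ i, ν' i := by
    rw [← Finset.sum_add_distrib]
    exact Finset.sum_congr rfl fun k _ => by simp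
  rw [e1, e2] at h3
  linarith
end

section
/- Let n ≥ 1. For ν ∈ ℤ^n let ν₋ denote the unique non-decreasing rearrangement of ν, ρ = (n−1, n−2, …, 1, 0) ∈ ℤ^n and d(ν) = (ν − ν₋)·ρ. In the polynomial ring ℤ[x₁^{±1},…,x_n^{±1}][q] (Laurent in the x's, polynomial in q), the ℤ-submodule A = ⊕_{ν∈ℤ^n} x^ν · q^{d(ν)} · ℤ[q], i.e. the ℤ-span of all monomials x^ν q^j with ν ∈ ℤ^n and j ≥ d(ν), is a ℤ[q]-subalgebra (it contains 1 and is closed under multiplication). -/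
open Finset

/-- The ring `ℤ[x₁^{±1},…,x_n^{±1}][q]`, realized as the monoid algebra of `ℤ^n × ℕ`:
the monomial `x^ν q^j` is `Finsupp.single (ν, j) 1`. -/
abbrev Amb (n : ℕ) := AddMonoidAlgebra ℤ ((Fin n → ℤ) × ℕ)

/-- The ℤ-submodule `A = ⊕_ν x^ν q^{d(ν)} ℤ[q]`, i.e. the ℤ-span of the monomials
`x^ν q^j` with `j ≥ d(ν)`. -/
noncomputable def Asub (n : ℕ) : Submodule ℤ (Amb n) :=
  Submodule.span ℤ
    {m : Amb n | ∃ (ν : Fin n → ℤ) (j : ℕ), dcoef ν ≤ (j : ℤ) ∧ m = AddMonoidAlgebra.single (ν, j) 1}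

/-!
Sorting `ν` non-decreasingly pairs its entries oppositely to the strictly decreasing `ρ`, so by the
rearrangement inequality `ν₋ · ρ ≤ (ν ∘ σ) · ρ` for every permutation `σ`. Applying this to `ν` and `μ`
with the permutation sorting `ν + μ` gives `(ν + μ)₋ · ρ ≥ ν₋ · ρ + μ₋ · ρ`, i.e. `d` is subadditive.
Hence the exponents `(ν, j)` with `d(ν) ≤ j` form a submonoid of `ℤ^n × ℕ`, and the span of the
monomials over a submonoid is closed under multiplication.
-/

open scoped Pointwise in
theorem AddMonoidAlgebra.mul_mem_span_single_image {R M : Type*} [CommSemiring R] [AddMonoid M]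
    (S : AddSubmonoid M) {a b : AddMonoidAlgebra R M}
    (ha : a ∈ Submodule.span R ((single · 1) '' (S : Set M)))
    (hb : b ∈ Submodule.span R ((single · 1) '' (S : Set M))) :
    a * b ∈ Submodule.span R ((single · 1) '' (S : Set M)) := by
  have hmul : ((single · (1 : R)) '' (S : Set M)) * ((single · (1 : R)) '' (S : Set M)) ⊆
      (single · 1) '' (S : Set M) := by
    rintro _ ⟨_, ⟨x, hx, rfl⟩, _, ⟨y, hy, rfl⟩, rfl⟩
    exact ⟨x + y, S.add_mem hx hy, by simp [single_mul_single]⟩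
  have hab := Submodule.mul_mem_mul ha hb
  rw [Submodule.span_mul_span] at hab
  exact Submodule.span_mono hmul hab

lemma antivary_antidom_rhoVec {n : ℕ} (ν : Fin n → ℤ) : Antivary (antidom ν) (rhoVec n) := by
  intro i j hρ
  have hji : j < i := by
    by_contra! hij
    have : (i : ℤ) ≤ j := by exact_mod_cast hij
    simp only [rhoVec] at hρ
    omega
  exact Tuple.monotone_sort ν hji.le

lemma sum_antidom_mul_rhoVec_le {n : ℕ} (ν : Fin n → ℤ) (σ : Equiv.Perm (Fin n)) :
    ∑ i, antidom ν i * rhoVec n i ≤ ∑ i, ν (σ i) * rhoVec n i := by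
  have h := (antivary_antidom_rhoVec ν).sum_smul_le_sum_comp_perm_smul
    (σ := σ.trans (Tuple.sort ν)⁻¹)
  simpa [antidom] using h

lemma dcoef_zero (n : ℕ) : dcoef (0 : Fin n → ℤ) = 0 := by
  simp [dcoef, antidom]

lemma dcoef_add_le {n : ℕ} (ν μ : Fin n → ℤ) : dcoef (ν + μ) ≤ dcoef ν + dcoef μ := by
  have hν := sum_antidom_mul_rhoVec_le ν (Tuple.sort (ν + μ))
  have hμ := sum_antidom_mul_rhoVec_le μ (Tuple.sort (ν + μ))
  simp only [dcoef, antidom, Function.comp_apply, Pi.add_apply, sub_mul, add_mul,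
    Finset.sum_sub_distrib, Finset.sum_add_distrib] at hν hμ ⊢
  linarith

def dcoefLeSubmonoid (n : ℕ) : AddSubmonoid ((Fin n → ℤ) × ℕ) where
  carrier := {p | dcoef p.1 ≤ p.2}
  zero_mem' := by simp [dcoef_zero]
  add_mem' {p p'} hp hp' := by
    simp only [Set.mem_ofPred_eq, Prod.fst_add, Prod.snd_add, Nat.cast_add] at hp hp' ⊢
    linarith [dcoef_add_le p.1 p'.1]

lemma Asub_eq_span (n : ℕ) :
    Asub n = Submodule.span ℤ
      ((AddMonoidAlgebra.single · 1) '' (dcoefLeSubmonoid n : Set ((Fin n → ℤ) × ℕ))) := by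
  unfold Asub
  congr 1
  ext m
  simp [dcoefLeSubmonoid, eq_comm]

lemma single_one_mem_Asub {n : ℕ} {p : (Fin n → ℤ) × ℕ} (hp : p ∈ dcoefLeSubmonoid n) :
    AddMonoidAlgebra.single p (1 : ℤ) ∈ Asub n :=
  Asub_eq_span n ▸ Submodule.subset_span ⟨p, hp, rfl⟩

theorem stmt1_general (n : ℕ) :
    (1 : Amb n) ∈ Asub n ∧
    (AddMonoidAlgebra.single ((0 : Fin n → ℤ), (1 : ℕ)) (1 : ℤ) : Amb n) ∈ Asub n ∧
    ∀ a ∈ Asub n, ∀ b ∈ Asub n, a * b ∈ Asub n := by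
  refine ⟨?_, ?_, ?_⟩
  · rw [AddMonoidAlgebra.one_def]
    exact single_one_mem_Asub (dcoefLeSubmonoid n).zero_mem
  · exact single_one_mem_Asub (by simp [dcoefLeSubmonoid, dcoef_zero])
  · intro a ha b hb
    rw [Asub_eq_span] at ha hb ⊢
    exact AddMonoidAlgebra.mul_mem_span_single_image _ ha hb

theorem stmt1 (n : ℕ) (hn : 1 ≤ n) :
    (1 : Amb n) ∈ Asub n ∧
    (AddMonoidAlgebra.single ((0 : Fin n → ℤ), (1 : ℕ)) (1 : ℤ) : Amb n) ∈ Asub n ∧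
    ∀ a ∈ Asub n, ∀ b ∈ Asub n, a * b ∈ Asub n :=
  stmt1_general n
end

section
/- Let n ≥ 1. Say that ν ∈ ℤ^n is σ-antidominant for a permutation σ ∈ S_n if ν_{σ(1)} ≤ ν_{σ(2)} ≤ … ≤ ν_{σ(n)}. Let S ⊆ ℤ^n be a set such that for any two elements ν, ν′ ∈ S there exists σ ∈ S_n for which both ν and ν′ are σ-antidominant (i.e. any two elements of S lie in a common closed Weyl chamber). Then there exists a single σ ∈ S_n such that every element of S is σ-antidominant (i.e. S is contained in one closed Weyl chamber). -/
/-- `ν` is `σ`-antidominant: `ν_{σ(1)} ≤ ν_{σ(2)} ≤ … ≤ ν_{σ(n)}`. -/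
def IsSigmaAntidominant {n : ℕ} (σ : Equiv.Perm (Fin n)) (ν : Fin n → ℤ) : Prop :=
  Monotone fun i => ν (σ i)

theorem stmt2 (n : ℕ) (hn : 1 ≤ n) (S : Set (Fin n → ℤ))
    (hS : ∀ ν ∈ S, ∀ ν' ∈ S, ∃ σ : Equiv.Perm (Fin n),
      IsSigmaAntidominant σ ν ∧ IsSigmaAntidominant σ ν') :
    ∃ σ : Equiv.Perm (Fin n), ∀ ν ∈ S, IsSigmaAntidominant σ ν := by
  classical
  -- the "global" preorder relation
  set r : Fin n → Fin n → Prop := fun i j => ∀ ν ∈ S, ν i ≤ ν j with hr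
  -- totality of r, using pairwise compatibility
  have htot : ∀ i j, r i j ∨ r j i := by
    intro i j
    by_contra h
    simp only [hr, not_or, not_forall, not_le, exists_prop] at h
    obtain ⟨⟨ν1, hν1, h1⟩, ν2, hν2, h2⟩ := h
    obtain ⟨σ, m1, m2⟩ := hS ν1 hν1 ν2 hν2
    have e1 : ν1 (σ (σ.symm i)) = ν1 i := by rw [Equiv.apply_symm_apply]
    have e2 : ν1 (σ (σ.symm j)) = ν1 j := by rw [Equiv.apply_symm_apply]
    have e3 : ν2 (σ (σ.symm i)) = ν2 i := by rw [Equiv.apply_symm_apply]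
    have e4 : ν2 (σ (σ.symm j)) = ν2 j := by rw [Equiv.apply_symm_apply]
    have hij : ¬ (σ.symm i ≤ σ.symm j) := by
      intro hle
      have := m1 hle
      simp only [e1, e2] at this
      omega
    have hji : ¬ (σ.symm j ≤ σ.symm i) := by
      intro hle
      have := m2 hle
      simp only [e3, e4] at this
      omega
    omega
  have htrans : ∀ i j k, r i j → r j k → r i k := by
    intro i j k hij hjk ν hν
    exact (hij ν hν).trans (hjk ν hν)
  -- sort `finRange n` by `r`
  set le : Fin n → Fin n → Bool := fun i j => decide (r i j) with hle
  set l : List (Fin n) := (List.finRange n).mergeSort le with hl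
  have hperm : l.Perm (List.finRange n) := List.mergeSort_perm _ _
  have hlen : l.length = n := by simpa using hperm.length_eq
  have hnd : l.Nodup := hperm.nodup_iff.2 (List.nodup_finRange n)
  have hsorted : List.Pairwise r l := by
    have := List.pairwise_mergeSort (le := le)
      (fun a b c h1 h2 => by
        simp only [hle, decide_eq_true_eq] at *
        exact htrans a b c h1 h2)
      (fun a b => by
        simp only [hle, Bool.or_eq_true, decide_eq_true_eq]
        exact htot a b)
      (List.finRange n)
    refine List.Pairwise.imp ?_ this
    intro a b hab
    simpa [hle] using hab
  -- build the permutation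
  have hinj : Function.Injective fun k : Fin n => l.get (Fin.cast hlen.symm k) := by
    intro a b hab
    have := List.nodup_iff_injective_get.1 hnd hab
    exact Fin.cast_injective _ this
  refine ⟨Equiv.ofBijective _ (Finite.injective_iff_bijective.1 hinj), ?_⟩
  intro ν hν
  intro a b hab
  simp only [Equiv.ofBijective_apply]
  have hrel : r (l.get (Fin.cast hlen.symm a)) (l.get (Fin.cast hlen.symm b)) := by
    rcases eq_or_lt_of_le hab with h | h
    · subst h; intro ν hν; exact le_refl _
    · exact hsorted.rel_get_of_lt (by simpa using h)
  exact hrel ν hν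
end

section
/- Let n ≥ 1. Call ν, ν′ ∈ ℤ^n chamber-compatible if (ν_i − ν_j)·(ν′_i − ν′_j) ≥ 0 for all indices i, j (equivalently, ν and ν′ lie in a common closed Weyl chamber for S_n). Let R be the free ℤ-module with basis (E_ν)_{ν∈ℤ^n}, equipped with the ℤ-bilinear multiplication determined by E_ν · E_{ν′} = E_{ν+ν′} if ν and ν′ are chamber-compatible, and E_ν · E_{ν′} = 0 otherwise. Then this multiplication is associative and commutative, and E_0 is a multiplicative unit; hence R is a commutative ring. -/
/-- `ν` and `ν'` are chamber-compatible: `(ν_i - ν_j)(ν'_i - ν'_j) ≥ 0` for all `i, j`. -/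
def ChamberCompat {n : ℕ} (ν ν' : Fin n → ℤ) : Prop :=
  ∀ i j, 0 ≤ (ν i - ν j) * (ν' i - ν' j)

instance {n : ℕ} (ν ν' : Fin n → ℤ) : Decidable (ChamberCompat ν ν') :=
  inferInstanceAs (Decidable (∀ i j, 0 ≤ (ν i - ν j) * (ν' i - ν' j)))

/-- The multiplication on the free ℤ-module `R = ⊕_{ν ∈ ℤ^n} ℤ·E_ν` determined ℤ-bilinearly by
`E_ν · E_{ν'} = E_{ν+ν'}` if `ν, ν'` are chamber-compatible, and `0` otherwise.
Here `E_ν = Finsupp.single ν 1`. -/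
noncomputable def vmul {n : ℕ} (f g : (Fin n → ℤ) →₀ ℤ) : (Fin n → ℤ) →₀ ℤ :=
  f.sum fun ν a => g.sum fun ν' b =>
    if ChamberCompat ν ν' then Finsupp.single (ν + ν') (a * b) else 0

/-! Chamber-compatibility is "having the same sign" coordinatewise on the differences
`ν_i - ν_j`. Given that `ν` and `ν'` agree in sign, `ν + ν'` agrees in sign with `ν''` exactly
when both `ν` and `ν'` do, so `E_ν E_ν' E_ν''` is nonzero iff `ν, ν', ν''` are pairwise
compatible, whichever way it is bracketed. `E_0` is a unit because `0` is compatible with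
everything. -/

theorem add_mul_nonneg_iff_of_mul_nonneg {α : Type*} [CommRing α] [LinearOrder α]
    [IsStrictOrderedRing α] {a b c : α} (hab : 0 ≤ a * b) :
    0 ≤ (a + b) * c ↔ 0 ≤ a * c ∧ 0 ≤ b * c := by
  refine ⟨fun h => ?_, fun ⟨hac, hbc⟩ => by rw [add_mul]; exact add_nonneg hac hbc⟩
  rcases mul_nonneg_iff.mp hab with ⟨ha, hb⟩ | ⟨ha, hb⟩ <;> rcases le_total 0 c with hc | hc <;>
    constructor <;> nlinarith

namespace ChamberCompat

variable {n : ℕ} {ν ν' ν'' : Fin n → ℤ}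

theorem symm (h : ChamberCompat ν ν') : ChamberCompat ν' ν :=
  fun i j => mul_comm (ν i - ν j) _ ▸ h i j

theorem comm : ChamberCompat ν ν' ↔ ChamberCompat ν' ν :=
  ⟨symm, symm⟩

theorem zero_left (ν : Fin n → ℤ) : ChamberCompat 0 ν :=
  fun i j => by simp

theorem add_left_iff (h : ChamberCompat ν ν') :
    ChamberCompat (ν + ν') ν'' ↔ ChamberCompat ν ν'' ∧ ChamberCompat ν' ν'' := by
  simp only [ChamberCompat, Pi.add_apply, add_sub_add_comm,
    add_mul_nonneg_iff_of_mul_nonneg (h _ _), forall_and]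

theorem add_right_iff (h : ChamberCompat ν' ν'') :
    ChamberCompat ν (ν' + ν'') ↔ ChamberCompat ν ν' ∧ ChamberCompat ν ν'' := by
  rw [comm, add_left_iff h, comm (ν := ν'), comm (ν := ν'')]

theorem assoc_iff :
    (ChamberCompat ν ν' ∧ ChamberCompat (ν + ν') ν'') ↔
      (ChamberCompat ν' ν'' ∧ ChamberCompat ν (ν' + ν'')) := by
  constructor
  · rintro ⟨h₁₂, h⟩
    obtain ⟨h₁₃, h₂₃⟩ := (add_left_iff h₁₂).1 h
    exact ⟨h₂₃, (add_right_iff h₂₃).2 ⟨h₁₂, h₁₃⟩⟩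
  · rintro ⟨h₂₃, h⟩
    obtain ⟨h₁₂, h₁₃⟩ := (add_right_iff h₂₃).1 h
    exact ⟨h₁₂, (add_left_iff h₁₂).2 ⟨h₁₃, h₂₃⟩⟩

end ChamberCompat

section vmul

variable {n : ℕ}

open Finsupp

@[simp]
theorem vmul_single_single (ν ν' : Fin n → ℤ) (a b : ℤ) :
    vmul (single ν a) (single ν' b) =
      if ChamberCompat ν ν' then single (ν + ν') (a * b) else 0 := by
  unfold vmul
  rw [sum_single_index (by simp), sum_single_index (by split_ifs <;> simp)]

@[simp]
theorem zero_vmul (g : (Fin n → ℤ) →₀ ℤ) : vmul 0 g = 0 := by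
  simp [vmul]

@[simp]
theorem vmul_zero (f : (Fin n → ℤ) →₀ ℤ) : vmul f 0 = 0 := by
  simp [vmul]

theorem add_vmul (f₁ f₂ g : (Fin n → ℤ) →₀ ℤ) :
    vmul (f₁ + f₂) g = vmul f₁ g + vmul f₂ g := by
  unfold vmul
  refine sum_add_index' (fun _ => by simp) fun ν a₁ a₂ => ?_
  rw [← sum_add]
  refine sum_congr fun ν' _ => ?_
  split_ifs <;> simp [add_mul]

theorem vmul_add (f g₁ g₂ : (Fin n → ℤ) →₀ ℤ) :
    vmul f (g₁ + g₂) = vmul f g₁ + vmul f g₂ := by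
  unfold vmul
  rw [← sum_add]
  refine sum_congr fun ν _ => sum_add_index' (fun _ => by simp) fun ν' b₁ b₂ => ?_
  split_ifs <;> simp [mul_add]

theorem vmul_comm (f g : (Fin n → ℤ) →₀ ℤ) : vmul f g = vmul g f := by
  unfold vmul
  rw [sum_comm]
  refine sum_congr fun ν' _ => sum_congr fun ν _ => ?_
  rw [add_comm, mul_comm]
  exact if_congr ChamberCompat.comm rfl rfl

theorem single_zero_one_vmul (f : (Fin n → ℤ) →₀ ℤ) : vmul (single 0 1) f = f := by
  induction f using Finsupp.induction_linear with
  | zero => simp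
  | add f g hf hg => rw [vmul_add, hf, hg]
  | single ν a => simp [ChamberCompat.zero_left]

theorem vmul_single_zero_one (f : (Fin n → ℤ) →₀ ℤ) : vmul f (single 0 1) = f := by
  rw [vmul_comm, single_zero_one_vmul]

theorem vmul_single_assoc (ν ν' ν'' : Fin n → ℤ) (a b c : ℤ) :
    vmul (vmul (single ν a) (single ν' b)) (single ν'' c) =
      vmul (single ν a) (vmul (single ν' b) (single ν'' c)) := by
  have h := ChamberCompat.assoc_iff (ν := ν) (ν' := ν') (ν'' := ν'')
  rw [vmul_single_single ν, vmul_single_single ν']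
  split_ifs <;> simp only [vmul_single_single, zero_vmul, vmul_zero, add_assoc, mul_assoc] <;>
    split_ifs <;> tauto

theorem vmul_assoc (f g h : (Fin n → ℤ) →₀ ℤ) :
    vmul (vmul f g) h = vmul f (vmul g h) := by
  induction f using Finsupp.induction_linear with
  | zero => simp
  | add f₁ f₂ h₁ h₂ => rw [add_vmul, add_vmul, add_vmul, h₁, h₂]
  | single ν a =>
  induction g using Finsupp.induction_linear with
  | zero => simp
  | add g₁ g₂ h₁ h₂ => rw [vmul_add, add_vmul, h₁, h₂, add_vmul, vmul_add]
  | single ν' b =>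
  induction h using Finsupp.induction_linear with
  | zero => simp
  | add h₁ h₂ e₁ e₂ => rw [vmul_add, vmul_add, vmul_add, e₁, e₂]
  | single ν'' c => exact vmul_single_assoc ν ν' ν'' a b c

end vmul

theorem stmt3_general (n : ℕ) :
    (∀ f g h : (Fin n → ℤ) →₀ ℤ, vmul (vmul f g) h = vmul f (vmul g h)) ∧
    (∀ f g : (Fin n → ℤ) →₀ ℤ, vmul f g = vmul g f) ∧
    (∀ f : (Fin n → ℤ) →₀ ℤ, vmul (Finsupp.single 0 1) f = f) ∧
    (∀ f : (Fin n → ℤ) →₀ ℤ, vmul f (Finsupp.single 0 1) = f) :=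
  ⟨vmul_assoc, vmul_comm, single_zero_one_vmul, vmul_single_zero_one⟩

theorem stmt3 (n : ℕ) (hn : 1 ≤ n) :
    (∀ f g h : (Fin n → ℤ) →₀ ℤ, vmul (vmul f g) h = vmul f (vmul g h)) ∧
    (∀ f g : (Fin n → ℤ) →₀ ℤ, vmul f g = vmul g f) ∧
    (∀ f : (Fin n → ℤ) →₀ ℤ, vmul (Finsupp.single 0 1) f = f) ∧
    (∀ f : (Fin n → ℤ) →₀ ℤ, vmul f (Finsupp.single 0 1) = f) :=
  stmt3_general n
end

section
/- Let n ≥ 1, let R be the free ℤ-module with basis (E_ν)_{ν∈ℤ^n}, multiplication E_ν·E_{ν′} = E_{ν+ν′} if (ν_i−ν_j)(ν′_i−ν′_j) ≥ 0 for all i,j and 0 otherwise, and S_n acting by ring automorphisms σ(E_ν) = E_{σ·ν}. For any σ ∈ S_n, the composite of the inclusion R^{S_n} ⊆ R with the chamber projection pr_σ : R → ℤ[M_σ] (where M_σ = {ν : ν_{σ(1)} ≤ … ≤ ν_{σ(n)}} and pr_σ(E_ν) = e^ν if ν ∈ M_σ, else 0) is an isomorphism of rings R^{S_n} ≅ ℤ[M_σ].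 -/
/-- The action of `σ ∈ S_n` on `R`: `σ(E_ν) = E_{σ·ν}` where `(σ·ν)_j = ν_{σ⁻¹(j)}`. -/
noncomputable def pact {n : ℕ} (σ : Equiv.Perm (Fin n)) :
    ((Fin n → ℤ) →₀ ℤ) →ₗ[ℤ] ((Fin n → ℤ) →₀ ℤ) :=
  Finsupp.lmapDomain ℤ ℤ (fun ν : Fin n → ℤ => fun j => ν (σ⁻¹ j))

/-- The invariant ring `R^{S_n}`, as a ℤ-submodule of `R`. -/
noncomputable def invSub (n : ℕ) : Submodule ℤ ((Fin n → ℤ) →₀ ℤ) where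
  carrier := {f | ∀ σ : Equiv.Perm (Fin n), pact σ f = f}
  add_mem' := fun ha hb σ => by rw [map_add, ha σ, hb σ]
  zero_mem' := fun σ => map_zero _
  smul_mem' := fun c f hf σ => by rw [map_smul, hf σ]

/-- The submonoid `M_σ = {ν : ν_{σ(1)} ≤ … ≤ ν_{σ(n)}}` of `ℤ^n`. -/
def chamberMonoid {n : ℕ} (σ : Equiv.Perm (Fin n)) : AddSubmonoid (Fin n → ℤ) where
  carrier := {ν | Monotone fun i => ν (σ i)}
  add_mem' := fun ha hb => ha.add hb
  zero_mem' := monotone_const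

open scoped Classical in
/-- The chamber projection `pr_σ : R → ℤ[M_σ]`, with `pr_σ(E_ν) = e^ν` if `ν ∈ M_σ`
and `pr_σ(E_ν) = 0` otherwise. -/
noncomputable def prj {n : ℕ} (σ : Equiv.Perm (Fin n)) (f : (Fin n → ℤ) →₀ ℤ) :
    AddMonoidAlgebra ℤ (chamberMonoid σ) :=
  f.sum fun ν a =>
    if h : Monotone fun i => ν (σ i) then
      AddMonoidAlgebra.single (⟨ν, h⟩ : chamberMonoid σ) a else 0

/-! Compatible exponents lying in a common chamber `M_σ` multiply to their sum, and a compatible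
pair whose sum lies in `M_σ` lies in `M_σ` itself; hence `pr_σ` is multiplicative. Every
`S_n`-orbit in `ℤ^n` meets `M_σ` in exactly one point (its sorted representative), so an invariant
element is determined by its coefficients on `M_σ`, and the orbit sum of `μ ∈ M_σ` is an invariant
preimage of `e^μ`. -/

section ChamberProjection

variable {n : ℕ} (σ : Equiv.Perm (Fin n))

lemma prj_add (f g : (Fin n → ℤ) →₀ ℤ) : prj σ (f + g) = prj σ f + prj σ g := by
  classical
  refine Finsupp.sum_add_index' (fun ν => ?_) (fun ν a b => ?_) <;> split <;> simp

noncomputable def prjAddHom : ((Fin n → ℤ) →₀ ℤ) →+ AddMonoidAlgebra ℤ (chamberMonoid σ) :=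
  AddMonoidHom.mk' (prj σ) (prj_add σ)

lemma prj_eq_sum_prj_single (f : (Fin n → ℤ) →₀ ℤ) :
    prj σ f = f.sum fun ν a => prj σ (Finsupp.single ν a) := by
  conv_lhs => rw [← Finsupp.sum_single f]
  exact map_finsuppSum (prjAddHom σ) _ _

lemma prj_single_of_mem {ν : Fin n → ℤ} (h : ν ∈ chamberMonoid σ) (a : ℤ) :
    prj σ (Finsupp.single ν a) = AddMonoidAlgebra.single (⟨ν, h⟩ : chamberMonoid σ) a := by
  classical
  rw [prj, Finsupp.sum_single_index, dif_pos (show Monotone _ from h)]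
  simp

lemma prj_single_of_not_mem {ν : Fin n → ℤ} (h : ν ∉ chamberMonoid σ) (a : ℤ) :
    prj σ (Finsupp.single ν a) = 0 := by
  classical
  rw [prj, Finsupp.sum_single_index, dif_neg (show ¬Monotone _ from h)]
  simp

lemma coeff_prj (f : (Fin n → ℤ) →₀ ℤ) (m : chamberMonoid σ) : (prj σ f).coeff m = f m := by
  classical
  rw [prj_eq_sum_prj_single, AddMonoidAlgebra.coeff_finsuppSum, Finsupp.sum_apply, Finsupp.sum,
    Finset.sum_eq_single (m : Fin n → ℤ)]
  · rw [prj_single_of_mem σ m.2]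
    simp
  · intro ν _ hne
    by_cases h : ν ∈ chamberMonoid σ
    · rw [prj_single_of_mem σ h, AddMonoidAlgebra.coeff_single, Finsupp.single_apply,
        if_neg (fun heq => hne (congrArg Subtype.val heq))]
    · rw [prj_single_of_not_mem σ h, AddMonoidAlgebra.coeff_zero, Finsupp.coe_zero, Pi.zero_apply]
  · intro hm
    rw [Finsupp.notMem_support_iff.mp hm, Finsupp.single_zero]
    simp [prj]

end ChamberProjection

section Multiplicativity

variable {n : ℕ} (σ : Equiv.Perm (Fin n))

lemma chamberCompat_of_mem_chamberMonoid {ν ν' : Fin n → ℤ} (hν : ν ∈ chamberMonoid σ)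
    (hν' : ν' ∈ chamberMonoid σ) : ChamberCompat ν ν' := by
  intro i j
  rcases le_total (σ⁻¹ i) (σ⁻¹ j) with hij | hij
  · have h : ν i ≤ ν j := by simpa using hν hij
    have h' : ν' i ≤ ν' j := by simpa using hν' hij
    nlinarith
  · have h : ν j ≤ ν i := by simpa using hν hij
    have h' : ν' j ≤ ν' i := by simpa using hν' hij
    nlinarith

lemma mem_chamberMonoid_of_chamberCompat {ν ν' : Fin n → ℤ} (hc : ChamberCompat ν ν')
    (hs : ν + ν' ∈ chamberMonoid σ) : ν ∈ chamberMonoid σ ∧ ν' ∈ chamberMonoid σ := by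
  constructor <;> intro i j hij <;>
  · have hprod := hc (σ i) (σ j)
    have hsum : ν (σ i) + ν' (σ i) ≤ ν (σ j) + ν' (σ j) := by simpa using hs hij
    nlinarith

lemma prj_vmul_single (ν ν' : Fin n → ℤ) (a b : ℤ) :
    prj σ (if ChamberCompat ν ν' then Finsupp.single (ν + ν') (a * b) else 0) =
      prj σ (Finsupp.single ν a) * prj σ (Finsupp.single ν' b) := by
  by_cases h : ν ∈ chamberMonoid σ ∧ ν' ∈ chamberMonoid σ
  · obtain ⟨hν, hν'⟩ := h
    rw [if_pos (chamberCompat_of_mem_chamberMonoid σ hν hν'),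
      prj_single_of_mem σ (add_mem hν hν'), prj_single_of_mem σ hν, prj_single_of_mem σ hν',
      AddMonoidAlgebra.single_mul_single]
    rfl
  · have hrhs : prj σ (Finsupp.single ν a) * prj σ (Finsupp.single ν' b) = 0 := by
      rcases not_and_or.mp h with hν | hν'
      · rw [prj_single_of_not_mem σ hν, zero_mul]
      · rw [prj_single_of_not_mem σ hν', mul_zero]
    rw [hrhs]
    split_ifs with hc
    · exact prj_single_of_not_mem σ (fun hs => h (mem_chamberMonoid_of_chamberCompat σ hc hs)) _
    · exact map_zero (prjAddHom σ)

lemma prj_vmul (f g : (Fin n → ℤ) →₀ ℤ) : prj σ (vmul f g) = prj σ f * prj σ g := by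
  rw [vmul, prj_eq_sum_prj_single σ f, prj_eq_sum_prj_single σ g, Finsupp.sum_mul]
  change prjAddHom σ _ = _
  simp only [map_finsuppSum, prjAddHom, AddMonoidHom.mk'_apply, prj_vmul_single, Finsupp.mul_sum]

lemma prj_single_zero_one : prj σ (Finsupp.single 0 1) = 1 :=
  prj_single_of_mem σ (zero_mem _) 1

end Multiplicativity

section Invariants

variable {n : ℕ}

lemma pact_single (ρ : Equiv.Perm (Fin n)) (ν : Fin n → ℤ) (a : ℤ) :
    pact ρ (Finsupp.single ν a) = Finsupp.single (ν ∘ ⇑ρ⁻¹) a :=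
  Finsupp.mapDomain_single

lemma apply_comp_perm_of_mem_invSub {f : (Fin n → ℤ) →₀ ℤ} (hf : f ∈ invSub n)
    (ρ : Equiv.Perm (Fin n)) (ν : Fin n → ℤ) : f (ν ∘ ⇑ρ) = f ν :=
  calc f (ν ∘ ⇑ρ) = pact ρ⁻¹ f (ν ∘ ⇑ρ) := by rw [hf ρ⁻¹]
    _ = f ν := Finsupp.mapDomain_apply ρ⁻¹⁻¹.surjective.injective_comp_right f ν

variable (σ : Equiv.Perm (Fin n))

lemma exists_comp_perm_mem_chamberMonoid (ν : Fin n → ℤ) :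
    ∃ τ : Equiv.Perm (Fin n), ν ∘ ⇑τ ∈ chamberMonoid σ := by
  refine ⟨σ⁻¹.trans (Tuple.sort ν), ?_⟩
  have h : (fun i => (ν ∘ ⇑(σ⁻¹.trans (Tuple.sort ν))) (σ i)) = ν ∘ ⇑(Tuple.sort ν) := by
    funext i
    simp
  show Monotone _
  rw [h]
  exact Tuple.monotone_sort ν

lemma comp_perm_eq_of_mem_chamberMonoid {μ : Fin n → ℤ} {τ : Equiv.Perm (Fin n)}
    (hμ : μ ∈ chamberMonoid σ) (hμτ : μ ∘ ⇑τ ∈ chamberMonoid σ) : μ ∘ ⇑τ = μ := by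
  have h := Tuple.unique_monotone (f := μ) (σ := τ * σ) (τ := σ) hμτ hμ
  funext j
  simpa using congrFun h (σ⁻¹ j)

lemma eq_of_prj_eq_of_mem_invSub {f g : (Fin n → ℤ) →₀ ℤ} (hf : f ∈ invSub n)
    (hg : g ∈ invSub n) (h : prj σ f = prj σ g) : f = g := by
  ext ν
  obtain ⟨τ, hτ⟩ := exists_comp_perm_mem_chamberMonoid σ ν
  calc f ν = f (ν ∘ ⇑τ) := (apply_comp_perm_of_mem_invSub hf τ ν).symm
    _ = (prj σ f).coeff ⟨ν ∘ ⇑τ, hτ⟩ := (coeff_prj σ f ⟨ν ∘ ⇑τ, hτ⟩).symm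
    _ = g (ν ∘ ⇑τ) := by rw [h, coeff_prj]
    _ = g ν := apply_comp_perm_of_mem_invSub hg τ ν

def permOrbit (μ : Fin n → ℤ) : Finset (Fin n → ℤ) :=
  Finset.univ.image fun τ : Equiv.Perm (Fin n) => μ ∘ ⇑τ

lemma mem_permOrbit {μ ν : Fin n → ℤ} : ν ∈ permOrbit μ ↔ ∃ τ : Equiv.Perm (Fin n), μ ∘ ⇑τ = ν := by
  simp [permOrbit]

lemma comp_perm_mem_permOrbit {μ ν : Fin n → ℤ} (hν : ν ∈ permOrbit μ) (ρ : Equiv.Perm (Fin n)) :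
    ν ∘ ⇑ρ ∈ permOrbit μ := by
  obtain ⟨τ, rfl⟩ := mem_permOrbit.mp hν
  exact mem_permOrbit.mpr ⟨ρ.trans τ, rfl⟩

noncomputable def orbitSum (μ : Fin n → ℤ) (a : ℤ) : (Fin n → ℤ) →₀ ℤ :=
  ∑ ν ∈ permOrbit μ, Finsupp.single ν a

lemma orbitSum_mem_invSub (μ : Fin n → ℤ) (a : ℤ) : orbitSum μ a ∈ invSub n := by
  intro ρ
  rw [orbitSum, map_sum]
  simp_rw [pact_single]
  refine Finset.sum_nbij' (· ∘ ⇑ρ⁻¹) (· ∘ ⇑ρ) (fun ν hν => comp_perm_mem_permOrbit hν _)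
    (fun ν hν => comp_perm_mem_permOrbit hν _) (fun ν _ => ?_) (fun ν _ => ?_) (fun _ _ => rfl)
  all_goals funext j; simp

lemma prj_orbitSum {μ : Fin n → ℤ} (hμ : μ ∈ chamberMonoid σ) (a : ℤ) :
    prj σ (orbitSum μ a) = AddMonoidAlgebra.single (⟨μ, hμ⟩ : chamberMonoid σ) a := by
  change prjAddHom σ _ = _
  rw [orbitSum, map_sum, Finset.sum_eq_single_of_mem μ (mem_permOrbit.mpr ⟨1, rfl⟩)]
  · exact prj_single_of_mem σ hμ a
  · intro ν hν hne
    obtain ⟨τ, rfl⟩ := mem_permOrbit.mp hν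
    exact prj_single_of_not_mem σ (fun hμτ => hne (comp_perm_eq_of_mem_chamberMonoid σ hμ hμτ)) a

lemma exists_mem_invSub_prj_eq (g : AddMonoidAlgebra ℤ (chamberMonoid σ)) :
    ∃ f ∈ invSub n, prj σ f = g := by
  induction g using AddMonoidAlgebra.induction with
  | zero => exact ⟨0, (invSub n).zero_mem, map_zero (prjAddHom σ)⟩
  | single_add m b g _ _ ih =>
    obtain ⟨f, hf, rfl⟩ := ih
    exact ⟨orbitSum m b + f, (invSub n).add_mem (orbitSum_mem_invSub _ b) hf,
      by rw [prj_add, prj_orbitSum σ m.2]⟩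

end Invariants

theorem stmt8_general (n : ℕ) (σ : Equiv.Perm (Fin n)) :
    Function.Bijective (fun f : invSub n => prj σ (f : (Fin n → ℤ) →₀ ℤ)) ∧
    (∀ f g : (Fin n → ℤ) →₀ ℤ, prj σ (vmul f g) = prj σ f * prj σ g) ∧
    (∀ f g : (Fin n → ℤ) →₀ ℤ, prj σ (f + g) = prj σ f + prj σ g) ∧
    prj σ (Finsupp.single 0 1) = 1 := by
  refine ⟨⟨fun f g h => Subtype.ext (eq_of_prj_eq_of_mem_invSub σ f.2 g.2 h), fun g => ?_⟩,
    prj_vmul σ, prj_add σ, prj_single_zero_one σ⟩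
  obtain ⟨f, hf, rfl⟩ := exists_mem_invSub_prj_eq σ g
  exact ⟨⟨f, hf⟩, rfl⟩

/-- The composite `R^{S_n} ⊆ R → ℤ[M_σ]` of the inclusion of the invariants with the
chamber projection `pr_σ` is an isomorphism of rings (`pr_σ` is a ring homomorphism and
its restriction to the invariants is bijective). -/
theorem stmt8 (n : ℕ) (hn : 1 ≤ n) (σ : Equiv.Perm (Fin n)) :
    Function.Bijective (fun f : invSub n => prj σ (f : (Fin n → ℤ) →₀ ℤ)) ∧
    (∀ f g : (Fin n → ℤ) →₀ ℤ, prj σ (vmul f g) = prj σ f * prj σ g) ∧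
    (∀ f g : (Fin n → ℤ) →₀ ℤ, prj σ (f + g) = prj σ f + prj σ g) ∧
    prj σ (Finsupp.single 0 1) = 1 :=
  stmt8_general n σ
end

section
/- Let k be a field, q > 1 an integer, t ≥ 1 and c ≥ 1. Let S_n act on (k^×)^n by (σ·x)_j = x_{σ⁻¹(j)}, and for μ ∈ ℤ^n and η ∈ k^× set μ(η) = (η^{μ₁},…,η^{μ_n}). Let w ∈ S_n satisfy w^t = 1 and set φ(x)_j = (x_{w(j)})^q. Suppose ζ′ ∈ k^× has order q^{ct} − 1 and put ζ = (ζ′)^{(q^{ct}−1)/(q^t−1)} (so ζ has order q^t − 1 and is the norm of ζ′ from 𝔽_{q^{ct}} to 𝔽_{q^t}). Then ∏_{i=0}^{ct−1} φ^i(μ(ζ′)) = ∏_{i=0}^{t−1} φ^i(μ(ζ)) in (k^×)^n. -/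
/-- Jantzen's element `s = s_{w,μ} = ∏_{i=0}^{t-1} φ^i(μ(ζ)) ∈ (k^×)^n`, where
`φ(x)_j = (x_{w(j)})^q` and `μ(ζ) = (ζ^{μ₁},…,ζ^{μ_n})`. -/
def jS {n : ℕ} {k : Type*} [Field k] (q t : ℕ) (w : Equiv.Perm (Fin n)) (ζ : kˣ)
    (μ : Fin n → ℤ) : Fin n → kˣ :=
  ∏ i ∈ Finset.range t,
    (fun x : Fin n → kˣ => fun j => (x (w j)) ^ q)^[i] (fun j => ζ ^ (μ j))

/-!
Since `w ^ t = 1`, the `i`-th factor of `s` is `a_i ^ q ^ i` with `a_i` periodic of period `t`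
in `i`, so the product over `c * t` indices is `c` copies of the product over `t` indices, the
`m`-th one twisted by `q ^ (m * t)`: it equals `s_t(ζ') ^ ∑_{m<c} (q^t)^m`. This exponent is
`(q^{ct} - 1) / (q^t - 1)`, and `s_t` commutes with raising `ζ` to a power.
-/

open Finset

lemma Function.Periodic.prod_range_mul_pow_pow {M : Type*} [CommMonoid M] {f : ℕ → M} {t : ℕ}
    (hf : Function.Periodic f t) (q c : ℕ) :
    ∏ i ∈ range (c * t), f i ^ q ^ i =
      (∏ i ∈ range t, f i ^ q ^ i) ^ ∑ s ∈ range c, (q ^ t) ^ s := by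
  induction c with
  | zero => simp
  | succ c ih =>
    have hfc : Function.Periodic f (c * t) := by simpa using hf.nat_mul c
    have hblock : ∀ i, f (c * t + i) ^ q ^ (c * t + i) = (f i ^ q ^ i) ^ (q ^ t) ^ c := by
      intro i
      rw [add_comm, hfc i, ← pow_mul, pow_add, ← pow_mul, mul_comm t c]
    rw [Nat.succ_mul, prod_range_add, ih, prod_congr rfl fun i _ => hblock i, prod_pow,
      sum_range_succ, pow_add]

lemma Equiv.Perm.iterate_comp_pow {ι M : Type*} [Monoid M] (w : Equiv.Perm ι) (q i : ℕ)
    (x : ι → M) :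
    (fun x : ι → M => fun j => x (w j) ^ q)^[i] x = (x ∘ ⇑(w ^ i)) ^ q ^ i := by
  induction i with
  | zero => simp
  | succ i ih =>
    rw [Function.iterate_succ_apply', ih]
    funext j
    simp [pow_succ, pow_mul]

section Jantzen

variable {n : ℕ} {k : Type*} [Field k]

lemma jS_eq_prod (q t : ℕ) (w : Equiv.Perm (Fin n)) (ζ : kˣ) (μ : Fin n → ℤ) :
    jS q t w ζ μ = ∏ i ∈ range t, (fun j => ζ ^ μ ((w ^ i) j)) ^ q ^ i :=
  prod_congr rfl fun i _ => w.iterate_comp_pow q i _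

lemma jS_pow (q t N : ℕ) (w : Equiv.Perm (Fin n)) (ζ : kˣ) (μ : Fin n → ℤ) :
    jS q t w (ζ ^ N) μ = jS q t w ζ μ ^ N := by
  have hbase : ∀ i, (fun j => (ζ ^ N) ^ μ ((w ^ i) j)) = (fun j => ζ ^ μ ((w ^ i) j)) ^ N := by
    intro i
    funext j
    simp only [Pi.pow_apply, ← zpow_natCast, ← zpow_mul, mul_comm]
  simp only [jS_eq_prod, hbase, ← prod_pow, pow_right_comm]

lemma jS_mul_of_pow_eq_one (q t c : ℕ) {w : Equiv.Perm (Fin n)} (hw : w ^ t = 1) (ζ : kˣ)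
    (μ : Fin n → ℤ) :
    jS q (c * t) w ζ μ = jS q t w ζ μ ^ ∑ s ∈ range c, (q ^ t) ^ s := by
  have hperiodic : Function.Periodic (fun i => fun j => ζ ^ μ ((w ^ i) j)) t := by
    intro i
    simp only [pow_add, hw, mul_one]
  simp only [jS_eq_prod]
  exact hperiodic.prod_range_mul_pow_pow q c

end Jantzen

theorem stmt11_general {k : Type*} [Field k] (n q t c : ℕ) (hq : 1 < q) (ht : 1 ≤ t)
    (ζ' : kˣ)
    (w : Equiv.Perm (Fin n)) (hw : w ^ t = 1) (μ : Fin n → ℤ) :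
    jS q (c * t) w ζ' μ = jS q t w (ζ' ^ ((q ^ (c * t) - 1) / (q ^ t - 1))) μ := by
  have hqt : 2 ≤ q ^ t := Nat.one_lt_pow (by omega) hq
  rw [jS_pow, mul_comm c t, pow_mul, ← Nat.geomSum_eq hqt, mul_comm t c,
    jS_mul_of_pow_eq_one q t c hw]

theorem stmt11 {k : Type*} [Field k] (n q t c : ℕ) (hq : 1 < q) (ht : 1 ≤ t) (hc : 1 ≤ c)
    (ζ' : kˣ) (hζ' : orderOf ζ' = q ^ (c * t) - 1)
    (w : Equiv.Perm (Fin n)) (hw : w ^ t = 1) (μ : Fin n → ℤ) :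
    jS q (c * t) w ζ' μ = jS q t w (ζ' ^ ((q ^ (c * t) - 1) / (q ^ t - 1))) μ :=
  stmt11_general n q t c hq ht ζ' w hw μ
end

section
/- Fix a composition n = n₁ + … + n_r with consecutive blocks B₁,…,B_r, Young subgroup W_L = {w ∈ S_n : w(B_i) = B_i ∀i}, and W(L) the group of rigid block permutations preserving block sizes (w maps the j-th element of B_i to the j-th element of B_{τ(i)} for some τ with n_{τ(i)} = n_i). Let q be a prime power, ζ a generator of 𝔽_q^×, and ρ(ζ) = (ζ^{n−1}, ζ^{n−2}, …, ζ, 1) ∈ (𝔽_q^×)^n. Let S_n act on (𝔽_q^×)^n by (σ·t)_j = t_{σ⁻¹(j)} and define the dot action by w•t = (w·(t·ρ(ζ)))·ρ(ζ)^{−1} (componentwise products and inverse). Then for every w ∈ W(L), ν ∈ W_L and t ∈ (𝔽_q^×)^n: w•(ν·t) = (wνw⁻¹)·(w•t), with wνw⁻¹ ∈ W_L. In particular the dot action of W(L) on the finite torus (𝔽_q^×)^n descends to a well-defined action on (𝔽_q^×)^n / W_L. -/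
/-! A composition `n = n₁ + … + n_r` with consecutive blocks `B₁,…,B_r` is encoded by a
monotone surjective map `b : Fin n → Fin r`: the block `B_i` is the fiber `b⁻¹(i)`. -/

/-- The size `n_i` of the block `B_i`. -/
def blockSize {n r : ℕ} (b : Fin n → Fin r) (i : Fin r) : ℕ :=
  (Finset.univ.filter fun x => b x = i).card

/-- The start of the block `B_i`. -/
def blockStart {n r : ℕ} (b : Fin n → Fin r) (i : Fin r) : ℕ :=
  (Finset.univ.filter fun x => b x < i).card

/-- The position of `x` inside its block. -/
def blockPos {n r : ℕ} (b : Fin n → Fin r) (x : Fin n) : ℕ := (x : ℕ) - blockStart b (b x)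

/-- Membership in the Young subgroup `W_L = {w ∈ S_n : w(B_i) = B_i for all i}`. -/
def InYoung {n r : ℕ} (b : Fin n → Fin r) (w : Equiv.Perm (Fin n)) : Prop :=
  ∀ x, b (w x) = b x

/-- `w ∈ W(L)`: `w` is a rigid block permutation preserving block sizes. -/
def IsRigidBlockPerm {n r : ℕ} (b : Fin n → Fin r) (w : Equiv.Perm (Fin n)) : Prop :=
  ∃ τ : Equiv.Perm (Fin r), (∀ i, blockSize b (τ i) = blockSize b i) ∧
    ∀ x, b (w x) = τ (b x) ∧ blockPos b (w x) = blockPos b x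

/-- `ρ(ζ) = (ζ^{n-1}, ζ^{n-2}, …, ζ, 1) ∈ (𝔽_q^×)^n`. -/
def rhoZeta {F : Type*} [Field F] (n : ℕ) (ζ : Fˣ) : Fin n → Fˣ :=
  fun i => ζ ^ (n - 1 - (i : ℕ))

/-- The natural permutation action of `S_n` on `(𝔽_q^×)^n`: `(w·t)_j = t_{w⁻¹(j)}`. -/
def permActF {F : Type*} [Field F] {n : ℕ} (w : Equiv.Perm (Fin n)) (t : Fin n → Fˣ) :
    Fin n → Fˣ := fun j => t (w⁻¹ j)

/-- The dot action on the finite torus: `w • t = (w·(t·ρ(ζ)))·ρ(ζ)⁻¹`. -/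
def dotActF {F : Type*} [Field F] {n : ℕ} (ζ : Fˣ) (w : Equiv.Perm (Fin n))
    (t : Fin n → Fˣ) : Fin n → Fˣ :=
  permActF w (t * rhoZeta n ζ) * (rhoZeta n ζ)⁻¹

/-!
A rigid block permutation `w` translates each block `B_i` onto `B_{τ(i)}` without reordering
it, so the displacement `w x - x` depends only on the block of `x`. Since
`ρ(ζ)_x / ρ(ζ)_{w x} = ζ ^ (w x - x)`, the correction factor by which the dot action differs
from the permutation action is constant along blocks, hence invariant under `W_L`; this gives
`w • (ν · t) = (w ν w⁻¹) · (w • t)`. Conjugation by `w` preserves `W_L` because `w` maps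
blocks to blocks.
-/

theorem blockStart_add_blockPos {n r : ℕ} {b : Fin n → Fin r} (hb : Monotone b) (x : Fin n) :
    blockStart b (b x) + blockPos b x = x := by
  refine Nat.add_sub_cancel' ?_
  calc blockStart b (b x) ≤ (Finset.Iio x).card :=
        Finset.card_le_card fun y hy => by
          simpa using hb.reflect_lt (Finset.mem_filter.mp hy).2
    _ = x := Fin.card_Iio x

theorem IsRigidBlockPerm.sub_eq_of_apply_eq {n r : ℕ} {b : Fin n → Fin r} (hb : Monotone b)
    {w : Equiv.Perm (Fin n)} (hw : IsRigidBlockPerm b w) {x y : Fin n} (hxy : b x = b y) :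
    (w x : ℤ) - x = (w y : ℤ) - y := by
  obtain ⟨τ, -, hτ⟩ := hw
  have hshift : ∀ z : Fin n,
      (w z : ℤ) - z = (blockStart b (τ (b z)) : ℤ) - blockStart b (b z) := by
    intro z
    have hwz := blockStart_add_blockPos hb (w z)
    have hz := blockStart_add_blockPos hb z
    rw [(hτ z).1, (hτ z).2] at hwz
    omega
  rw [hshift, hshift, hxy]

theorem InYoung.conj {n r : ℕ} {b : Fin n → Fin r} {w ν : Equiv.Perm (Fin n)}
    {τ : Fin r → Fin r} (hw : ∀ x, b (w x) = τ (b x)) (hν : InYoung b ν) :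
    InYoung b (w * ν * w⁻¹) := by
  intro x
  rw [Equiv.Perm.mul_apply, Equiv.Perm.mul_apply, hw, hν, ← hw, Equiv.Perm.coe_inv,
    Equiv.apply_symm_apply]

theorem rhoZeta_mul_inv_rhoZeta {F : Type*} [Field F] {n : ℕ} (ζ : Fˣ) (x y : Fin n) :
    rhoZeta n ζ x * (rhoZeta n ζ y)⁻¹ = ζ ^ ((y : ℤ) - x) := by
  simp only [rhoZeta, ← zpow_natCast, ← zpow_sub]
  congr 1
  omega

theorem dotActF_permActF_of_sub_eq {F : Type*} [Field F] {n : ℕ} (ζ : Fˣ)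
    {w ν : Equiv.Perm (Fin n)} (hwν : ∀ y, (w (ν y) : ℤ) - ν y = (w y : ℤ) - y)
    (t : Fin n → Fˣ) :
    dotActF ζ w (permActF ν t) = permActF (w * ν * w⁻¹) (dotActF ζ w t) := by
  funext j
  obtain ⟨y, rfl⟩ := (w * ν).surjective j
  simp only [dotActF, permActF, Pi.mul_apply, Pi.inv_apply, Equiv.Perm.mul_apply,
    Equiv.Perm.coe_inv, Equiv.symm_apply_apply, mul_inv_rev, inv_inv, mul_assoc,
    rhoZeta_mul_inv_rhoZeta, hwν]

theorem stmt14_general {F : Type*} [Field F] (n r : ℕ)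
    (ζ : Fˣ)
    (b : Fin n → Fin r) (hb : Monotone b)
    (w : Equiv.Perm (Fin n)) (hw : IsRigidBlockPerm b w) :
    -- `w•(ν·t) = (wνw⁻¹)·(w•t)` with `wνw⁻¹ ∈ W_L`
    (∀ ν : Equiv.Perm (Fin n), InYoung b ν →
      InYoung b (w * ν * w⁻¹) ∧
      ∀ t : Fin n → Fˣ, dotActF ζ w (permActF ν t) = permActF (w * ν * w⁻¹) (dotActF ζ w t)) ∧
    -- hence the dot action of `W(L)` descends to the orbit set `(𝔽_q^×)^n / W_L`
    (∀ t t' : Fin n → Fˣ, (∃ ν : Equiv.Perm (Fin n), InYoung b ν ∧ t' = permActF ν t) →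
      ∃ ν' : Equiv.Perm (Fin n), InYoung b ν' ∧ dotActF ζ w t' = permActF ν' (dotActF ζ w t)) := by
  obtain ⟨τ, -, hτ⟩ := id hw
  have hequiv : ∀ ν : Equiv.Perm (Fin n), InYoung b ν →
      InYoung b (w * ν * w⁻¹) ∧
      ∀ t : Fin n → Fˣ, dotActF ζ w (permActF ν t) = permActF (w * ν * w⁻¹) (dotActF ζ w t) :=
    fun ν hν => ⟨InYoung.conj (fun x => (hτ x).1) hν,
      dotActF_permActF_of_sub_eq ζ fun y => hw.sub_eq_of_apply_eq hb (hν y)⟩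
  refine ⟨hequiv, ?_⟩
  rintro t _ ⟨ν, hν, rfl⟩
  exact ⟨w * ν * w⁻¹, (hequiv ν hν).1, (hequiv ν hν).2 t⟩

theorem stmt14 {F : Type*} [Field F] [Fintype F] (n r q : ℕ)
    (hq : Fintype.card F = q) (hq' : IsPrimePow q)
    (ζ : Fˣ) (hζ : ∀ u : Fˣ, u ∈ Subgroup.zpowers ζ)
    (b : Fin n → Fin r) (hb : Monotone b) (hbs : Function.Surjective b)
    (w : Equiv.Perm (Fin n)) (hw : IsRigidBlockPerm b w) :
    -- `w•(ν·t) = (wνw⁻¹)·(w•t)` with `wνw⁻¹ ∈ W_L`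
    (∀ ν : Equiv.Perm (Fin n), InYoung b ν →
      InYoung b (w * ν * w⁻¹) ∧
      ∀ t : Fin n → Fˣ, dotActF ζ w (permActF ν t) = permActF (w * ν * w⁻¹) (dotActF ζ w t)) ∧
    -- hence the dot action of `W(L)` descends to the orbit set `(𝔽_q^×)^n / W_L`
    (∀ t t' : Fin n → Fˣ, (∃ ν : Equiv.Perm (Fin n), InYoung b ν ∧ t' = permActF ν t) →
      ∃ ν' : Equiv.Perm (Fin n), InYoung b ν' ∧ dotActF ζ w t' = permActF ν' (dotActF ζ w t)) :=
  stmt14_general n r ζ b hb w hw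
end
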